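/- arXiv:2002.02937 — 2 statements merged into one kernel-verified Lean document; each statement's English description precedes it below -/
import Mathlib

section
/- Truncations belong to X₀ (Lemma 2.4(b)): Let γ>1 and ε>0. If u:ℝ^N→[0,∞) is measurable, u=0 a.e. outside Ω, and the power u^γ belongs to X₀, then the truncation (u−ε)⁺ belongs to X₀. -/
open MeasureTheory Real Filter

noncomputable section

abbrev Euc (N : ℕ) := EuclideanSpace ℝ (Fin N)

def kern (N : ℕ) (s : ℝ) (u v : Euc N → ℝ) (p : Euc N × Euc N) : ℝ :=
  (u p.1 - u p.2) * (v p.1 - v p.2) / ‖p.1 - p.2‖ ^ ((N : ℝ) + 2 * s)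

def sqKern (N : ℕ) (s : ℝ) (u : Euc N → ℝ) (p : Euc N × Euc N) : ℝ :=
  (u p.1 - u p.2) ^ 2 / ‖p.1 - p.2‖ ^ ((N : ℝ) + 2 * s)

def Qset (N : ℕ) (Ω : Set (Euc N)) : Set (Euc N × Euc N) :=
  {p | p.1 ∈ Ω ∨ p.2 ∈ Ω}

def pairQ (N : ℕ) (s : ℝ) (Ω : Set (Euc N)) (u v : Euc N → ℝ) : ℝ :=
  ∫ p in Qset N Ω, kern N s u v p

def norm2 (N : ℕ) (s : ℝ) (u : Euc N → ℝ) : ℝ := ∫ p : Euc N × Euc N, sqKern N s u p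

def X0norm (N : ℕ) (s : ℝ) (u : Euc N → ℝ) : ℝ := Real.sqrt (norm2 N s u)

def MemX0 (N : ℕ) (s : ℝ) (Ω : Set (Euc N)) (u : Euc N → ℝ) : Prop :=
  Measurable u ∧ (∀ᵐ x : Euc N, x ∉ Ω → u x = 0) ∧ Integrable (sqKern N s u)

def MemHsLoc (N : ℕ) (s : ℝ) (Ω : Set (Euc N)) (u : Euc N → ℝ) : Prop :=
  ∀ K : Set (Euc N), IsCompact K → K ⊆ Ω → IntegrableOn (sqKern N s u) (K ×ˢ K)

def IsTest (N : ℕ) (Ω : Set (Euc N)) (φ : Euc N → ℝ) : Prop :=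
  ContDiff ℝ (⊤ : ℕ∞) φ ∧ HasCompactSupport φ ∧ tsupport φ ⊆ Ω

def twoS (N : ℕ) (s : ℝ) : ℝ := 2 * N / (N - 2 * s)

def twoMu (N : ℕ) (s μ : ℝ) : ℝ := (2 * N - μ) / (N - 2 * s)

def choq (N : ℕ) (s μ : ℝ) (Ω : Set (Euc N)) (u v : Euc N → ℝ) : ℝ :=
  ∫ x in Ω, ∫ y in Ω,
    u x ^ twoMu N s μ * u y ^ (twoMu N s μ - 1) * v y / ‖x - y‖ ^ μ

def IsWeakSol (N : ℕ) (s q μ lam : ℝ) (Ω : Set (Euc N)) (u : Euc N → ℝ) : Prop :=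
  Measurable u ∧
  MemHsLoc N s Ω u ∧
  MemLp u (ENNReal.ofReal (twoS N s)) (volume.restrict Ω) ∧
  (∀ᵐ x : Euc N, x ∉ Ω → u x = 0) ∧
  (∀ K : Set (Euc N), IsCompact K → K ⊆ Ω →
    ∃ m : ℝ, 0 < m ∧ ∀ᵐ x ∂(volume.restrict K), m ≤ u x) ∧
  (∀ φ : Euc N → ℝ, IsTest N Ω φ →
    pairQ N s Ω u φ = (∫ x in Ω, u x ^ (-q) * φ x) + lam * choq N s μ Ω u φ) ∧
  (∀ ε : ℝ, 0 < ε → MemX0 N s Ω (fun x => max (u x - ε) 0))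

def psiq (N : ℕ) (s q A : ℝ) (Ω : Set (Euc N)) (x : Euc N) : ℝ :=
  if q < 1 then Metric.infDist x (frontier Ω) ^ s
  else if q = 1 then
    Metric.infDist x (frontier Ω) ^ s *
      Real.sqrt (Real.log (A / Metric.infDist x (frontier Ω) ^ s))
  else Metric.infDist x (frontier Ω) ^ (2 * s / (q + 1))

def LamSup (N : ℕ) (s q μ : ℝ) (Ω : Set (Euc N)) : ℝ :=
  sSup {lam : ℝ | 0 < lam ∧ ∃ u : Euc N → ℝ, IsWeakSol N s q μ lam Ω u}

def gfun {N : ℕ} (q : ℝ) (ub : Euc N → ℝ) (x : Euc N) (t : ℝ) : ℝ :=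
  ub x ^ (-q) - (t + ub x) ^ (-q)

def Gfun {N : ℕ} (q : ℝ) (ub : Euc N → ℝ) (x : Euc N) (y : ℝ) : ℝ :=
  ∫ τ in (0:ℝ)..y, gfun q ub x τ

def choqT (N : ℕ) (s μ : ℝ) (Ω : Set (Euc N)) (ub u v : Euc N → ℝ) : ℝ :=
  ∫ x in Ω, ∫ y in Ω,
    (u x + ub x) ^ twoMu N s μ * (u y + ub y) ^ (twoMu N s μ - 1) * v y / ‖x - y‖ ^ μ

def IsSingularSol (N : ℕ) (s q : ℝ) (Ω : Set (Euc N)) (ub : Euc N → ℝ) : Prop :=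
  Continuous ub ∧ (∃ M : ℝ, ∀ x, |ub x| ≤ M) ∧
  (∀ x ∈ Ω, 0 < ub x) ∧ (∀ x, x ∉ Ω → ub x = 0) ∧
  MemHsLoc N s Ω ub ∧
  (∀ φ : Euc N → ℝ, IsTest N Ω φ →
    pairQ N s Ω ub φ = ∫ x in Ω, ub x ^ (-q) * φ x)

def IsTildeSol (N : ℕ) (s q μ lam : ℝ) (Ω : Set (Euc N)) (ub u : Euc N → ℝ) : Prop :=
  MemX0 N s Ω u ∧ (∀ᵐ x : Euc N, 0 ≤ u x) ∧
  (∀ K : Set (Euc N), IsCompact K → K ⊆ Ω →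
    IntegrableOn (fun x => gfun q ub x (u x)) K) ∧
  (∀ φ : Euc N → ℝ, IsTest N Ω φ → (∀ x, 0 ≤ φ x) →
    pairQ N s Ω u φ + (∫ x in Ω, gfun q ub x (u x) * φ x)
      - lam * choqT N s μ Ω ub u φ = 0)

def choqSym (N : ℕ) (s μ : ℝ) (Ω : Set (Euc N)) (ub u : Euc N → ℝ) : ℝ :=
  ∫ x in Ω, ∫ y in Ω,
    (u x + ub x) ^ twoMu N s μ * (u y + ub y) ^ twoMu N s μ / ‖x - y‖ ^ μ

def InDomJ (N : ℕ) (s q : ℝ) (Ω : Set (Euc N)) (ub u : Euc N → ℝ) : Prop :=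
  IntegrableOn (fun x => Gfun q ub x (u x)) Ω

def Jval (N : ℕ) (s q μ lam : ℝ) (Ω : Set (Euc N)) (ub u : Euc N → ℝ) : ℝ :=
  (1/2) * norm2 N s u + (∫ x in Ω, Gfun q ub x (u x))
    - lam / (2 * twoMu N s μ) * choqSym N s μ Ω ub u

def choqDouble (N : ℕ) (s μ : ℝ) (u : Euc N → ℝ) : ℝ :=
  ∫ p : Euc N × Euc N, |u p.1| ^ twoMu N s μ * |u p.2| ^ twoMu N s μ / ‖p.1 - p.2‖ ^ μ

def SHL (N : ℕ) (s μ : ℝ) (Ω : Set (Euc N)) : ℝ :=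
  sInf {r : ℝ | ∃ u : Euc N → ℝ, MemX0 N s Ω u ∧ ¬ (∀ᵐ x : Euc N, u x = 0) ∧
    r = norm2 N s u * choqDouble N s μ u ^ (-(1 / twoMu N s μ))}

def Sconst (N : ℕ) (s : ℝ) (Ω : Set (Euc N)) : ℝ :=
  sInf {r : ℝ | ∃ u : Euc N → ℝ, MemX0 N s Ω u ∧ ¬ (∀ᵐ x : Euc N, u x = 0) ∧
    r = norm2 N s u / (∫ x in Ω, |u x| ^ twoS N s) ^ (2 / twoS N s)}


-- core: 0 < ε ≤ b ≤ a implies a - b ≤ ε^(1-γ)/γ * (a^γ - b^γ)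
lemma core_ineq {γ ε a b : ℝ} (hγ : 1 < γ) (hε : 0 < ε) (hb : ε ≤ b) (hab : b ≤ a) :
    a - b ≤ ε ^ (1 - γ) / γ * (a ^ γ - b ^ γ) := by
  have hb0 : 0 < b := hε.trans_le hb
  have ha0 : 0 < a := hb0.trans_le hab
  have hs : (0:ℝ) ≤ (a - b) / b := div_nonneg (by linarith) hb0.le
  have hbern := one_add_mul_self_le_rpow_one_add (s := (a-b)/b) (by linarith) hγ.le
  have h1 : (1 + (a-b)/b) = a / b := by field_simp; ring
  rw [h1, div_rpow ha0.le hb0.le] at hbern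
  -- multiply by b^γ
  have hbγ : (0:ℝ) < b ^ γ := rpow_pos_of_pos hb0 γ
  have h2 : b ^ γ + γ * (a - b) * b ^ (γ - 1) ≤ a ^ γ := by
    have := mul_le_mul_of_nonneg_right hbern hbγ.le
    rw [div_mul_cancel₀ _ hbγ.ne'] at this
    calc b ^ γ + γ * (a - b) * b ^ (γ - 1)
        = (1 + γ * ((a-b)/b)) * b ^ γ := by
          rw [add_mul, one_mul]
          rw [show γ * ((a-b)/b) * b ^ γ = γ * (a-b) * (b ^ γ / b) by ring,
            ← rpow_sub_one hb0.ne']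
      _ ≤ a ^ γ := this
  have h3 : ε ^ (γ - 1) ≤ b ^ (γ - 1) := rpow_le_rpow hε.le hb (by linarith)
  have h4 : γ * (a - b) * ε ^ (γ - 1) ≤ a ^ γ - b ^ γ := by
    have : γ * (a - b) * ε ^ (γ - 1) ≤ γ * (a - b) * b ^ (γ - 1) :=
      mul_le_mul_of_nonneg_left h3 (by nlinarith)
    linarith
  have hεγ : (0:ℝ) < ε ^ (γ - 1) := rpow_pos_of_pos hε _
  have hkey : ε ^ (1 - γ) * ε ^ (γ - 1) = 1 := by
    rw [← rpow_add hε]; norm_num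
  have := mul_le_mul_of_nonneg_left h4 (le_of_lt (div_pos (rpow_pos_of_pos hε (1-γ)) (by linarith : (0:ℝ) < γ)))
  calc a - b = ε ^ (1-γ)/γ * (γ * (a - b) * ε ^ (γ - 1)) := by
        field_simp
        linear_combination (-(a - b)) * hkey
    _ ≤ ε ^ (1-γ)/γ * (a ^ γ - b ^ γ) := this

lemma trunc_ineq {γ ε : ℝ} (hγ : 1 < γ) (hε : 0 < ε) {a b : ℝ} (ha : 0 ≤ a) (hb : 0 ≤ b) :
    |max (a - ε) 0 - max (b - ε) 0| ≤ ε ^ (1 - γ) / γ * |a ^ γ - b ^ γ| := by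
  have hC : (0:ℝ) ≤ ε ^ (1-γ)/γ := le_of_lt (div_pos (rpow_pos_of_pos hε _) (by linarith))
  wlog hab : b ≤ a generalizing a b
  · rw [abs_sub_comm, abs_sub_comm (a^γ)]
    exact this hb ha (le_of_not_ge hab)
  have hpow : b ^ γ ≤ a ^ γ := rpow_le_rpow hb hab (by linarith)
  rw [abs_of_nonneg (by linarith : (0:ℝ) ≤ a ^ γ - b ^ γ)]
  have hmax : max (b - ε) 0 ≤ max (a - ε) 0 := max_le_max (by linarith) le_rfl
  rw [abs_of_nonneg (by linarith)]
  rcases le_or_gt a ε with h | h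
  · rw [max_eq_right (by linarith), max_eq_right (by linarith)]
    simp [mul_nonneg hC (by linarith : (0:ℝ) ≤ a^γ - b^γ)]
  rcases le_or_gt b ε with h2 | h2
  · rw [max_eq_left (by linarith), max_eq_right (by linarith)]
    have := core_ineq hγ hε le_rfl h.le
    have hεγ : b ^ γ ≤ ε ^ γ := rpow_le_rpow hb h2 (by linarith)
    simp only [sub_zero]
    calc a - ε ≤ ε ^ (1-γ)/γ * (a ^ γ - ε ^ γ) := this
      _ ≤ ε ^ (1-γ)/γ * (a ^ γ - b ^ γ) := by
          apply mul_le_mul_of_nonneg_left _ hC; linarith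
  · rw [max_eq_left (by linarith), max_eq_left (by linarith)]
    have := core_ineq hγ hε h2.le hab
    linarith

/-- Lemma 2.4(b): truncations belong to `X₀`. -/
theorem truncation_mem_X0
    (N : ℕ) (s γ ε : ℝ) (Ω : Set (Euc N))
    (hN : 1 ≤ N) (hs0 : 0 < s) (hs1 : s < 1) (hNs : 2 * s < N)
    (hΩo : IsOpen Ω) (hΩb : Bornology.IsBounded Ω)
    (hγ : 1 < γ) (hε : 0 < ε)
    (u : Euc N → ℝ) (humeas : Measurable u) (hunn : ∀ x, 0 ≤ u x)
    (huzero : ∀ᵐ x : Euc N, x ∉ Ω → u x = 0)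
    (hpow : MemX0 N s Ω (fun x => u x ^ γ)) :
    MemX0 N s Ω (fun x => max (u x - ε) 0) := by
  have htr : Measurable (fun x => max (u x - ε) 0) :=
    (humeas.sub measurable_const).max measurable_const
  refine ⟨htr, ?_, ?_⟩
  · filter_upwards [huzero] with x hx hxΩ
    rw [hx hxΩ]
    simp [hε.le]
  · set C : ℝ := ε ^ (1 - γ) / γ with hC
    have hC0 : 0 ≤ C := le_of_lt (div_pos (Real.rpow_pos_of_pos hε _) (by linarith))
    have hmeas : AEStronglyMeasurable (sqKern N s (fun x => max (u x - ε) 0)) volume := by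
      refine Measurable.aestronglyMeasurable ?_
      unfold sqKern
      have hdm : Measurable fun p : Euc N × Euc N => ‖p.1 - p.2‖ ^ ((N : ℝ) + 2 * s) :=
        (Real.continuous_rpow_const (by positivity)).measurable.comp
          ((continuous_fst.sub continuous_snd).norm).measurable
      exact (((htr.comp measurable_fst).sub (htr.comp measurable_snd)).pow_const 2).div hdm
    refine Integrable.mono' (hpow.2.2.const_mul (C ^ 2)) hmeas ?_
    refine Eventually.of_forall fun p => ?_
    have hd0 : (0:ℝ) ≤ ‖p.1 - p.2‖ ^ ((N : ℝ) + 2 * s) :=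
      Real.rpow_nonneg (norm_nonneg _) _
    have hnum : (max (u p.1 - ε) 0 - max (u p.2 - ε) 0) ^ 2 ≤
        C ^ 2 * (u p.1 ^ γ - u p.2 ^ γ) ^ 2 := by
      have h := trunc_ineq hγ hε (hunn p.1) (hunn p.2)
      calc (max (u p.1 - ε) 0 - max (u p.2 - ε) 0) ^ 2
          = |max (u p.1 - ε) 0 - max (u p.2 - ε) 0| ^ 2 := (sq_abs _).symm
        _ ≤ (C * |u p.1 ^ γ - u p.2 ^ γ|) ^ 2 := by
            apply pow_le_pow_left₀ (abs_nonneg _) h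
        _ = C ^ 2 * (u p.1 ^ γ - u p.2 ^ γ) ^ 2 := by
            rw [mul_pow, sq_abs]
    have hsqnn : (0:ℝ) ≤ sqKern N s (fun x => max (u x - ε) 0) p :=
      div_nonneg (sq_nonneg _) hd0
    rw [Real.norm_eq_abs, abs_of_nonneg hsqnn]
    unfold sqKern
    rcases hd0.eq_or_lt with h | h
    · rw [← h]
      simp
    · rw [← mul_div_assoc]
      exact (div_le_div_iff_of_pos_right h).2 hnum

end
end

section
/- Properties of the translated singular nonlinearity (Lemma 5.3(ii)): Fix a>0 and q>0, and define g_a(t)=a^(−q)−(t+a)^(−q) for t>−a, and G_a(y)=∫₀^y g_a(τ) dτ for y>−a. Then: (a) G_a(σt)≤σ²·G_a(t) for every σ≥1 and t≥0; (b) G_a(t₁)−G_a(t₂)−(1/2)(g_a(t₁)+g_a(t₂))(t₁−t₂)≥0 whenever t₁≥t₂>−a; (c) G_a(t)−(1/2)g_a(t)·t≥0 for every t≥0. -/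
open MeasureTheory Real

noncomputable section

/-- Convexity of `x ↦ x ^ (-q)` on `(0, ∞)` for `q ≥ 0`. -/
lemma convexOn_rpow_neg (q : ℝ) (hq : 0 ≤ q) :
    ConvexOn ℝ (Set.Ioi (0:ℝ)) fun x : ℝ => x ^ (-q) := by
  have h1 : ConvexOn ℝ (Set.Ioi (0:ℝ)) fun x : ℝ => q * -Real.log x := by
    simpa [smul_eq_mul] using (strictConcaveOn_log_Ioi.concaveOn.neg).smul hq
  refine ⟨convex_Ioi 0, ?_⟩
  intro x hx y hy lam mu hl hm hs
  have hx' : (0:ℝ) < x := hx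
  have hy' : (0:ℝ) < y := hy
  have hxy : (0:ℝ) < lam • x + mu • y := h1.1 hx hy hl hm hs
  have key : (lam • x + mu • y) ^ (-q) = Real.exp (q * -Real.log (lam • x + mu • y)) := by
    rw [Real.rpow_def_of_pos hxy]; ring_nf
  have kx : x ^ (-q) = Real.exp (q * -Real.log x) := by
    rw [Real.rpow_def_of_pos hx']; ring_nf
  have ky : y ^ (-q) = Real.exp (q * -Real.log y) := by
    rw [Real.rpow_def_of_pos hy']; ring_nf
  show (lam • x + mu • y) ^ (-q) ≤ lam • x ^ (-q) + mu • y ^ (-q)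
  rw [key, kx, ky]
  calc Real.exp (q * -Real.log (lam • x + mu • y))
      ≤ Real.exp (lam • (q * -Real.log x) + mu • (q * -Real.log y)) :=
        Real.exp_le_exp.2 (h1.2 hx hy hl hm hs)
    _ ≤ lam • Real.exp (q * -Real.log x) + mu • Real.exp (q * -Real.log y) :=
        convexOn_exp.2 (Set.mem_univ _) (Set.mem_univ _) hl hm hs

/-- The translated singular nonlinearity `g_a(t) = a^(−q) − (t+a)^(−q)`. -/
def ga (a q t : ℝ) : ℝ := a ^ (-q) - (t + a) ^ (-q)

/-- Its primitive `G_a(y) = ∫₀^y g_a(τ) dτ`. -/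
def Ga (a q y : ℝ) : ℝ := ∫ τ in (0:ℝ)..y, ga a q τ

lemma ga_zero (a q : ℝ) : ga a q 0 = 0 := by simp [ga]

/-- Concavity inequality for `ga`. -/
lemma ga_concave (a q : ℝ) (hq : 0 < q) {x y lam mu : ℝ}
    (hx : -a < x) (hy : -a < y) (hl : 0 ≤ lam) (hm : 0 ≤ mu) (hs : lam + mu = 1) :
    lam * ga a q x + mu * ga a q y ≤ ga a q (lam * x + mu * y) := by
  have hconv := convexOn_rpow_neg q hq.le
  have h := hconv.2 (show x + a ∈ Set.Ioi (0:ℝ) by simp; linarith)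
    (show y + a ∈ Set.Ioi (0:ℝ) by simp; linarith) hl hm hs
  simp only [smul_eq_mul] at h
  have harg : lam * (x + a) + mu * (y + a) = lam * x + mu * y + a := by
    have : lam * a + mu * a = a := by rw [← add_mul, hs, one_mul]
    ring_nf; ring_nf at this ⊢; linarith
  rw [harg] at h
  simp only [ga]
  have e : lam * (a ^ (-q) - (x + a) ^ (-q)) + mu * (a ^ (-q) - (y + a) ^ (-q))
      = (lam + mu) * a ^ (-q) - (lam * (x + a) ^ (-q) + mu * (y + a) ^ (-q)) := by ring
  rw [e, hs, one_mul]
  linarith [h]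

lemma ga_continuousOn (a q : ℝ) (ha : 0 < a) :
    ContinuousOn (ga a q) (Set.Ioi (-a)) := by
  unfold ga
  apply ContinuousOn.sub continuousOn_const
  apply ContinuousOn.rpow_const
  · exact (continuous_id.add continuous_const).continuousOn
  · intro x hx
    left
    have : -a < x := hx
    exact ne_of_gt (by linarith)

lemma ga_intervalIntegrable (a q : ℝ) (ha : 0 < a) {c d : ℝ} (hc : -a < c) (hd : -a < d) :
    IntervalIntegrable (ga a q) volume c d := by
  apply ContinuousOn.intervalIntegrable
  apply (ga_continuousOn a q ha).mono
  intro x hx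
  have h1 : min c d ≤ x := hx.1
  have h2 : -a < min c d := lt_min hc hd
  exact lt_of_lt_of_le h2 h1

/-- Lemma 5.3(ii): properties of the translated singular nonlinearity. -/
theorem translated_nonlinearity_properties (a q : ℝ) (ha : 0 < a) (hq : 0 < q) :
    (∀ σ t : ℝ, 1 ≤ σ → 0 ≤ t → Ga a q (σ * t) ≤ σ ^ 2 * Ga a q t) ∧
    (∀ t₁ t₂ : ℝ, t₂ ≤ t₁ → -a < t₂ →
      0 ≤ Ga a q t₁ - Ga a q t₂ - (1 / 2) * (ga a q t₁ + ga a q t₂) * (t₁ - t₂)) ∧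
    (∀ t : ℝ, 0 ≤ t → 0 ≤ Ga a q t - (1 / 2) * ga a q t * t) := by
  -- Part (b), proved first
  have hb : ∀ t₁ t₂ : ℝ, t₂ ≤ t₁ → -a < t₂ →
      0 ≤ Ga a q t₁ - Ga a q t₂ - (1 / 2) * (ga a q t₁ + ga a q t₂) * (t₁ - t₂) := by
    intro t₁ t₂ hle ht₂
    rcases eq_or_lt_of_le hle with rfl | hlt
    · simp
    have ht₁ : -a < t₁ := ht₂.trans hlt
    have hdiff : Ga a q t₁ - Ga a q t₂ = ∫ τ in t₂..t₁, ga a q τ := by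
      unfold Ga
      exact intervalIntegral.integral_interval_sub_left
        (ga_intervalIntegrable a q ha (by linarith) ht₁)
        (ga_intervalIntegrable a q ha (by linarith) ht₂)
    set A : ℝ := (t₁ * ga a q t₂ - t₂ * ga a q t₁) / (t₁ - t₂) with hA
    set B : ℝ := (ga a q t₁ - ga a q t₂) / (t₁ - t₂) with hB
    have hd : (0:ℝ) < t₁ - t₂ := by linarith
    have hchord : ∀ τ ∈ Set.Icc t₂ t₁, A + B * τ ≤ ga a q τ := by
      intro τ hτ
      set lam := (τ - t₂) / (t₁ - t₂) with hlam
      set mu := (t₁ - τ) / (t₁ - t₂) with hmu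
      have hl : 0 ≤ lam := div_nonneg (by linarith [hτ.1]) hd.le
      have hm : 0 ≤ mu := div_nonneg (by linarith [hτ.2]) hd.le
      have hs : lam + mu = 1 := by
        rw [hlam, hmu, ← add_div, div_eq_one_iff_eq hd.ne']; ring
      have harg : lam * t₁ + mu * t₂ = τ := by
        rw [hlam, hmu]; field_simp; ring
      have := ga_concave a q hq ht₁ ht₂ hl hm hs
      rw [harg] at this
      have hAB : A + B * τ = lam * ga a q t₁ + mu * ga a q t₂ := by
        rw [hA, hB, hlam, hmu]; field_simp; ring
      linarith [this, hAB.le, hAB.ge]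
    have hint1 : IntervalIntegrable (fun τ => A + B * τ) volume t₂ t₁ :=
      ((by fun_prop : Continuous fun τ : ℝ => A + B * τ)).intervalIntegrable _ _
    have hint2 : IntervalIntegrable (ga a q) volume t₂ t₁ :=
      ga_intervalIntegrable a q ha ht₂ ht₁
    have hmono : (∫ τ in t₂..t₁, (A + B * τ)) ≤ ∫ τ in t₂..t₁, ga a q τ :=
      intervalIntegral.integral_mono_on hlt.le hint1 hint2 hchord
    have hcomp : (∫ τ in t₂..t₁, (A + B * τ)) = A * (t₁ - t₂) + B * ((t₁^2 - t₂^2)/2) := by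
      rw [intervalIntegral.integral_add intervalIntegrable_const
        ((by fun_prop : Continuous fun τ : ℝ => B * τ).intervalIntegrable _ _),
        intervalIntegral.integral_const, intervalIntegral.integral_const_mul,
        integral_id]
      simp [smul_eq_mul]
      ring
    have heq : A * (t₁ - t₂) + B * ((t₁^2 - t₂^2)/2)
        = (1 / 2) * (ga a q t₁ + ga a q t₂) * (t₁ - t₂) := by
      rw [hA, hB]; field_simp; ring
    rw [hdiff]
    linarith [hmono, hcomp.le, hcomp.ge, heq.le, heq.ge]
  refine ⟨?_, hb, ?_⟩
  · -- Part (a)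
    intro σ t hσ ht
    have hσ0 : 0 < σ := lt_of_lt_of_le one_pos hσ
    have hGa : Ga a q (σ * t) = σ * ∫ x in (0:ℝ)..t, ga a q (σ * x) := by
      unfold Ga
      rw [intervalIntegral.integral_comp_mul_left (ga a q) hσ0.ne']
      rw [mul_zero, smul_eq_mul]
      field_simp
    have hpt : ∀ x ∈ Set.Icc (0:ℝ) t, ga a q (σ * x) ≤ σ * ga a q x := by
      intro x hx
      have hx0 : 0 ≤ x := hx.1
      have hσx : -a < σ * x := lt_of_lt_of_le (by linarith) (mul_nonneg hσ0.le hx0)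
      have h0 : -a < 0 := by linarith
      have hcc := ga_concave a q hq (x := σ * x) (y := 0) (lam := 1/σ) (mu := 1 - 1/σ)
        hσx h0 (by positivity) (by rw [sub_nonneg]; exact (div_le_one hσ0).2 hσ) (by ring)
      rw [ga_zero, mul_zero, add_zero] at hcc
      have harg : 1/σ * (σ * x) = x := by field_simp
      rw [harg, add_zero] at hcc
      have : 1/σ * ga a q (σ * x) ≤ ga a q x := by linarith
      calc ga a q (σ * x) = σ * (1/σ * ga a q (σ * x)) := by field_simp
        _ ≤ σ * ga a q x := by
            apply mul_le_mul_of_nonneg_left this hσ0.le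
    have hintc : IntervalIntegrable (fun x => ga a q (σ * x)) volume 0 t := by
      apply ContinuousOn.intervalIntegrable
      apply (ga_continuousOn a q ha).comp (continuous_const.mul continuous_id).continuousOn
      intro x hx
      have h1 : min 0 t ≤ x := hx.1
      have h0 : (0:ℝ) ≤ x := le_trans (by simp [ht]) h1
      exact Set.mem_Ioi.2 (lt_of_lt_of_le (by linarith) (mul_nonneg (by linarith : (0:ℝ) ≤ σ) h0))
    have hint2 : IntervalIntegrable (ga a q) volume 0 t :=
      ga_intervalIntegrable a q ha (by linarith) (by linarith)
    have hmono : (∫ x in (0:ℝ)..t, ga a q (σ * x)) ≤ ∫ x in (0:ℝ)..t, σ * ga a q x := by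
      apply intervalIntegral.integral_mono_on ht hintc (hint2.const_mul σ) hpt
    rw [hGa]
    have : (∫ x in (0:ℝ)..t, σ * ga a q x) = σ * Ga a q t := by
      rw [intervalIntegral.integral_const_mul]; rfl
    calc σ * ∫ x in (0:ℝ)..t, ga a q (σ * x)
        ≤ σ * ∫ x in (0:ℝ)..t, σ * ga a q x := by
          apply mul_le_mul_of_nonneg_left hmono hσ0.le
      _ = σ ^ 2 * Ga a q t := by rw [this]; ring
  · -- Part (c)
    intro t ht
    have := hb t 0 ht (by linarith)
    have hGa0 : Ga a q 0 = 0 := intervalIntegral.integral_same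
    rw [hGa0, ga_zero] at this
    linarith

end
end
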